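/- If there exists a feasible isolation supervisor S_I such that the closed-loop system S_I/Ĝ is live and isolatable, then the system Ĝ is diagnosable. Equivalently (contrapositive): if Ĝ is not diagnosable, then for every isolation supervisor S_I, every string in L(Ĝ) along which a fault has occurred but not yet been diagnosed belongs to L(S_I/Ĝ), so S_I/Ĝ is not diagnosable and hence not isolatable. -/
import Mathlib


def proj {α : Type*} (Obs : α → Prop) [DecidablePred Obs] (s : List α) : List α :=
  s.filter (fun a => decide (Obs a))

def run {Q α : Type*} (δ : Q → α → Option Q) : Q → List α → Option Q
  | q, [] => some q
  | q, a :: s => (δ q a).bind fun q' => run δ q' s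

def Lang {Q α : Type*} (δ : Q → α → Option Q) (q0 : Q) : Set (List α) :=
  {s | (run δ q0 s).isSome}

/-- `Ψ(Σ_fi)`: strings of `M` ending with a fault event of type `i`. -/
def Psi {α : Type*} (M : Set (List α)) (Sf : Set α) : Set (List α) :=
  {s | s ∈ M ∧ ∃ u a, s = u ++ [a] ∧ a ∈ Sf}

/-- Diagnosability of a language `M`. -/
def Diagnosable {α : Type*} (Obs : α → Prop) [DecidablePred Obs] (M : Set (List α))
    {k : ℕ} (Sf : Fin k → Set α) : Prop :=
  ∃ n : ℕ, ∀ i : Fin k, ∀ s0 ∈ Psi M (Sf i), ∀ s : List α, s0 ++ s ∈ M → n ≤ s.length →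
    ∀ w ∈ M, proj Obs w = proj Obs (s0 ++ s) → ∃ j : Fin k, ∃ a ∈ w, a ∈ Sf j

/-- Isolatability of a language `M`. -/
def Isolatable {α : Type*} (Obs : α → Prop) [DecidablePred Obs] (M : Set (List α))
    {k : ℕ} (Sf : Fin k → Set α) : Prop :=
  ∀ i : Fin k, ∃ n : ℕ, ∀ s0 ∈ Psi M (Sf i), ∀ s : List α, s0 ++ s ∈ M → n ≤ s.length →
    ∀ w ∈ M, proj Obs w = proj Obs (s0 ++ s) → ∃ a ∈ w, a ∈ Sf i

/-- The fault-certain sublanguage `L_C(Ĝ)`: strings every observation-equivalent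
string of which contains a fault. -/
def FaultCertain {α : Type*} (Obs : α → Prop) [DecidablePred Obs] (L : Set (List α))
    {k : ℕ} (Sf : Fin k → Set α) : Set (List α) :=
  {s | s ∈ L ∧ ∀ w ∈ L, proj Obs w = proj Obs s → ∃ i : Fin k, ∃ a ∈ w, a ∈ Sf i}

theorem run_append {Q α : Type*} (δ : Q → α → Option Q) (q : Q) (u v : List α) :
    run δ q (u ++ v) = (run δ q u).bind (fun q' => run δ q' v) := by
  induction u generalizing q with
  | nil => simp [run]
  | cons a u ih =>
    simp only [List.cons_append, run]
    cases δ q a with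
    | none => simp
    | some q' => simp [ih]

theorem lang_prefix {Q α : Type*} (δ : Q → α → Option Q) (q0 : Q) {u v : List α}
    (h : u ++ v ∈ Lang δ q0) : u ∈ Lang δ q0 := by
  simp only [Lang, Set.mem_setOf_eq, run_append] at h ⊢
  cases hr : run δ q0 u with
  | none => rw [hr] at h; simp at h
  | some q' => simp

/-- If there exists a feasible isolation supervisor (i.e. a closed-loop language `Lcl` with
`L_UC(Ĝ) ⊆ Lcl ⊆ L(Ĝ)`) such that the closed-loop system is live and isolatable,
then the plant `Ĝ` is diagnosable. -/
theorem diagnosable_of_exists_valid_supervisor {Q α : Type*} (δ : Q → α → Option Q) (q0 : Q)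
    (Obs : α → Prop) [DecidablePred Obs] {k : ℕ} (Sf : Fin k → Set α)
    (hlive : ∀ s ∈ Lang δ q0, ∃ a : α, s ++ [a] ∈ Lang δ q0)
    (hex : ∃ Lcl : Set (List α),
      Lang δ q0 \ FaultCertain Obs (Lang δ q0) Sf ⊆ Lcl ∧
      Lcl ⊆ Lang δ q0 ∧
      (∀ s ∈ Lcl, ∃ a : α, s ++ [a] ∈ Lcl) ∧
      Isolatable Obs Lcl Sf) :
    Diagnosable Obs (Lang δ q0) Sf := by
  obtain ⟨Lcl, hUC, hsub, _hliveC, hiso⟩ := hex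
  choose N hN using hiso
  refine ⟨Finset.univ.sup N, ?_⟩
  intro i s0 hs0 s hss hlen w hw hproj
  -- if s0 is fault-certain, any obs-equivalent string to s0++s contains a fault
  by_cases hFC0 : s0 ∈ FaultCertain Obs (Lang δ q0) Sf
  · have hsplit : proj Obs w = proj Obs s0 ++ proj Obs s := by
      rw [hproj]; simp [proj, List.filter_append]
    rw [proj, List.filter_eq_append_iff] at hsplit
    obtain ⟨w1, w2, rfl, hw1, _⟩ := hsplit
    obtain ⟨_, hcert⟩ := hFC0
    obtain ⟨j, a, ha, haf⟩ := hcert w1 (lang_prefix δ q0 hw) hw1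
    exact ⟨j, a, List.mem_append_left _ ha, haf⟩
  · -- s0 ∈ Lcl
    have hs0L : s0 ∈ Lang δ q0 := hs0.1
    have hs0C : s0 ∈ Lcl := hUC ⟨hs0L, hFC0⟩
    by_cases hFCss : s0 ++ s ∈ FaultCertain Obs (Lang δ q0) Sf
    · exact hFCss.2 w hw hproj
    · have hssC : s0 ++ s ∈ Lcl := hUC ⟨hss, hFCss⟩
      by_cases hFCw : w ∈ FaultCertain Obs (Lang δ q0) Sf
      · exact hFCw.2 w hw rfl
      · have hwC : w ∈ Lcl := hUC ⟨hw, hFCw⟩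
        have hlen' : N i ≤ s.length :=
          le_trans (Finset.le_sup (Finset.mem_univ i)) hlen
        obtain ⟨a, ha, haf⟩ := hN i s0 ⟨hs0C, hs0.2⟩ s hssC hlen' w hwC hproj
        exact ⟨i, a, ha, haf⟩
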